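/- Define the optimal policies by the backward recursion ψ*_M(x) = G_M(x) and ψ*_k(x) = G_k(x)·M_{k+1}(ψ*_{k+1})(x) for k = M−1,…,0, assuming G_M > 0 and all intermediate integrals are finite and positive. Then for every k and x_{k-1}, the twisted potential satisfies G_k^{ψ*}(x_k) = 1 for all x_k with 0 ≤ k ≤ M (using ψ*_{M+1}≡1), and consequently Z^{ψ*} = M_0(ψ*_0); i.e., under the optimal policy the Feynman–Kac integral is computed exactly by a single deterministic constant M_0(ψ*_0) = Z. -/

import Mathlib

open MeasureTheory
open scoped ENNReal

/-!
Under the backward recursion `G_k · M_{k+1}(ψ*_{k+1}) = ψ*_k` (for `k = M` because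
`M_{M+1}(ψ*_{M+1}) = M_{M+1}(1) = 1`), every twisted potential is one. In the twisted integrand
the normalisers `M_k(ψ*_k)(x_{k-1})` telescope, so it is the untwisted integrand up to the
factor `M_0(ψ*_0) / M_0(ψ*_0)`. Integrating the untwisted integrand coordinate by coordinate from
the last one backwards (Tonelli in `ℝ≥0∞`, so no integrability is needed) replaces
`G_k · M_{k+1}(ψ*_{k+1})` by `ψ*_k` at each step and leaves `M_0(ψ*_0)`.
-/

theorem Fin.prod_succ_div_castSucc {K : Type*} [CommGroupWithZero K] :
    ∀ {n : ℕ} (f : Fin (n + 1) → K), (∀ i, f i ≠ 0) →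
      ∏ j : Fin n, f j.succ / f j.castSucc = f (Fin.last n) / f 0
  | 0, f, hf => by simp [div_self (hf 0)]
  | n + 1, f, hf => by
    have ih := Fin.prod_succ_div_castSucc (f ∘ Fin.castSucc) fun i => hf _
    simp only [Function.comp_apply, Fin.castSucc_zero, ← Fin.succ_castSucc] at ih
    rw [Fin.prod_univ_castSucc, ih, ← Fin.succ_last]
    exact div_mul_div_cancel₀' (hf _) _ _

theorem measurable_prod_chain {X R : Type*} [MeasurableSpace X] [CommMonoid R]
    [MeasurableSpace R] [MeasurableMul₂ R] {n : ℕ} {κ : ℕ → X → X → R}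
    (hκ : ∀ j, Measurable (Function.uncurry (κ j))) :
    Measurable fun x : Fin (n + 1) → X => ∏ j : Fin n, κ j (x j.castSucc) (x j.succ) :=
  Finset.measurable_prod _ fun j _ =>
    (hκ j).comp (f := fun x : Fin (n + 1) → X => (x j.castSucc, x j.succ))
      ((measurable_pi_apply _).prodMk (measurable_pi_apply _))

theorem lintegral_pi_chain {X : Type*} [MeasurableSpace X] (ν : Measure X) [SigmaFinite ν]
    (n : ℕ) {g : X → ℝ≥0∞} {κ : ℕ → X → X → ℝ≥0∞} {h : ℕ → X → ℝ≥0∞}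
    (hg : Measurable g) (hκ : ∀ j, Measurable (Function.uncurry (κ j)))
    (h_last : ∀ x, h n x = 1)
    (h_rec : ∀ j < n, ∀ x, h j x = ∫⁻ y, κ j x y * h (j + 1) y ∂ν) :
    ∫⁻ x : Fin (n + 1) → X, g (x 0) * ∏ j : Fin n, κ j (x j.castSucc) (x j.succ)
        ∂(Measure.pi fun _ => ν) = ∫⁻ x, g x * h 0 x ∂ν := by
  induction n generalizing g κ h with
  | zero =>
    simp only [Finset.univ_eq_empty, Finset.prod_empty, mul_one, h_last]
    exact (measurePreserving_funUnique ν (Fin 1)).lintegral_comp hg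
  | succ n ih =>
    have hchain := measurable_prod_chain (n := n) fun j => hκ (j + 1)
    rw [← (measurePreserving_piFinSuccAbove (fun _ => ν) 0).symm.lintegral_comp_emb
      (MeasurableEquiv.measurableEmbedding _)]
    simp only [MeasurableEquiv.piFinSuccAbove_symm_apply, Fin.insertNthEquiv, Equiv.coe_fn_mk,
      Fin.insertNth_zero', Fin.prod_univ_succ, Fin.cons_zero, Fin.cons_succ, Fin.castSucc_zero,
      ← Fin.succ_castSucc, Fin.val_zero, Fin.val_succ]
    rw [lintegral_prod _ (by fun_prop)]
    refine lintegral_congr fun a => ?_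
    have hκa : Measurable (κ 0 a) := (hκ 0).comp measurable_prodMk_left
    dsimp only
    rw [lintegral_const_mul _ (by fun_prop),
      ih hκa (fun j => hκ (j + 1)) h_last (fun j hj => h_rec (j + 1) (by omega)),
      h_rec 0 n.succ_pos]

section FeynmanKac

variable {X : Type*} [MeasurableSpace X] {ν : Measure X} {M : ℕ} {M0 : X → ℝ}
  {Mk : ℕ → X → X → ℝ} {G ψs : ℕ → X → ℝ}

variable (M M0 Mk G) in
noncomputable def fkIntegrand (x : Fin (M + 1) → X) : ℝ :=
  G 0 (x 0) * M0 (x 0) *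
    ∏ j : Fin M, G (j + 1) (x j.succ) * Mk (j + 1) (x j.castSucc) (x j.succ)

variable (ν M M0 Mk G ψs) in
noncomputable def twistedFkIntegrand (x : Fin (M + 1) → X) : ℝ :=
  ((∫ y, ψs 0 y * M0 y ∂ν) * G 0 (x 0) * (∫ y, ψs 1 y * Mk 1 (x 0) y ∂ν) / ψs 0 (x 0)) *
    (ψs 0 (x 0) * M0 (x 0) / ∫ y, ψs 0 y * M0 y ∂ν) *
    ∏ j : Fin M,
      (G (j + 1) (x j.succ) * (∫ y, ψs (j + 2) y * Mk (j + 2) (x j.succ) y ∂ν) /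
          ψs (j + 1) (x j.succ)) *
        (ψs (j + 1) (x j.succ) * Mk (j + 1) (x j.castSucc) (x j.succ) /
          ∫ y, ψs (j + 1) y * Mk (j + 1) (x j.castSucc) y ∂ν)

theorem optimal_policy_backward_eq
    (hMψtop : ∀ x, ∫ y, ψs (M + 1) y * Mk (M + 1) x y ∂ν = 1)
    (hψM : ∀ x, ψs M x = G M x)
    (hψrec : ∀ k < M, ∀ x, ψs k x = G k x * ∫ y, ψs (k + 1) y * Mk (k + 1) x y ∂ν) :
    ∀ k ≤ M, ∀ x, G k x * ∫ y, ψs (k + 1) y * Mk (k + 1) x y ∂ν = ψs k x := by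
  intro k hk x
  rcases hk.lt_or_eq with hk | rfl
  · exact (hψrec k hk x).symm
  · rw [hMψtop, mul_one, hψM]

theorem measurable_optimal_policy [SFinite ν] (hGmeas : ∀ k, Measurable (G k))
    (hMkmeas : ∀ k, Measurable (Function.uncurry (Mk k)))
    (hψM : ∀ x, ψs M x = G M x)
    (hψrec : ∀ k < M, ∀ x, ψs k x = G k x * ∫ y, ψs (k + 1) y * Mk (k + 1) x y ∂ν)
    {k : ℕ} (hk : k ≤ M) : Measurable (ψs k) := by
  induction hk using Nat.decreasingInduction with
  | self => rw [funext hψM]; exact hGmeas M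
  | of_succ k hk ih =>
    rw [funext (hψrec k hk)]
    have hintegrand := (ih.comp measurable_snd).mul (hMkmeas (k + 1))
    exact (hGmeas k).mul hintegrand.stronglyMeasurable.integral_prod_right.measurable

theorem lintegral_ofReal_fkIntegrand [SigmaFinite ν] (hM0meas : Measurable M0)
    (hM0nonneg : ∀ x, 0 ≤ M0 x) (hMkmeas : ∀ k, Measurable (Function.uncurry (Mk k)))
    (hMknonneg : ∀ k x y, 0 ≤ Mk k x y) (hGmeas : ∀ k, Measurable (G k))
    (hGnonneg : ∀ k x, 0 ≤ G k x) (hψnonneg : ∀ k x, 0 ≤ ψs k x)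
    (hMψint : ∀ k x, Integrable (fun y => ψs k y * Mk k x y) ν)
    (hMψtop : ∀ x, ∫ y, ψs (M + 1) y * Mk (M + 1) x y ∂ν = 1)
    (hbackward : ∀ k ≤ M, ∀ x, G k x * ∫ y, ψs (k + 1) y * Mk (k + 1) x y ∂ν = ψs k x) :
    ∫⁻ x, ENNReal.ofReal (fkIntegrand M M0 Mk G x) ∂(Measure.pi fun _ => ν)
      = ∫⁻ x, ENNReal.ofReal (ψs 0 x * M0 x) ∂ν := by
  have hMψnonneg : ∀ k x, 0 ≤ ∫ y, ψs k y * Mk k x y ∂ν := fun k x =>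
    integral_nonneg fun y => mul_nonneg (hψnonneg k y) (hMknonneg k x y)
  have hchain := lintegral_pi_chain ν M
    (g := fun x => ENNReal.ofReal (G 0 x * M0 x))
    (κ := fun j x y => ENNReal.ofReal (G (j + 1) y * Mk (j + 1) x y))
    (h := fun j x => ENNReal.ofReal (∫ y, ψs (j + 1) y * Mk (j + 1) x y ∂ν))
    (by fun_prop)
    (fun j => ENNReal.measurable_ofReal.comp (((hGmeas _).comp measurable_snd).mul (hMkmeas _)))
    (fun x => by simp [hMψtop])
    (fun j hj x => by
      rw [ofReal_integral_eq_lintegral_ofReal (hMψint _ x)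
        (ae_of_all _ fun y => mul_nonneg (hψnonneg _ y) (hMknonneg _ x y))]
      refine lintegral_congr fun y => ?_
      rw [← ENNReal.ofReal_mul' (hMψnonneg _ y), ← hbackward (j + 1) hj y]
      ring_nf)
  convert hchain using 1 <;> refine lintegral_congr fun x => ?_
  · rw [fkIntegrand, ENNReal.ofReal_mul (mul_nonneg (hGnonneg _ _) (hM0nonneg _)),
      ENNReal.ofReal_prod_of_nonneg fun j _ => mul_nonneg (hGnonneg _ _) (hMknonneg _ _ _)]
  · rw [← ENNReal.ofReal_mul (mul_nonneg (hGnonneg _ _) (hM0nonneg _)),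
      ← hbackward 0 M.zero_le x]
    ring_nf

theorem integral_fkIntegrand [SigmaFinite ν] (hM0meas : Measurable M0)
    (hM0nonneg : ∀ x, 0 ≤ M0 x) (hMkmeas : ∀ k, Measurable (Function.uncurry (Mk k)))
    (hMknonneg : ∀ k x y, 0 ≤ Mk k x y) (hGmeas : ∀ k, Measurable (G k))
    (hGnonneg : ∀ k x, 0 ≤ G k x) (hψ0meas : Measurable (ψs 0)) (hψnonneg : ∀ k x, 0 ≤ ψs k x)
    (hMψint : ∀ k x, Integrable (fun y => ψs k y * Mk k x y) ν)
    (hMψtop : ∀ x, ∫ y, ψs (M + 1) y * Mk (M + 1) x y ∂ν = 1)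
    (hbackward : ∀ k ≤ M, ∀ x, G k x * ∫ y, ψs (k + 1) y * Mk (k + 1) x y ∂ν = ψs k x) :
    ∫ x, fkIntegrand M M0 Mk G x ∂(Measure.pi fun _ => ν) = ∫ x, ψs 0 x * M0 x ∂ν := by
  have hfk_meas : Measurable (fkIntegrand M M0 Mk G) :=
    ((hGmeas 0).comp (measurable_pi_apply 0)).mul (hM0meas.comp (measurable_pi_apply 0)) |>.mul
      (measurable_prod_chain (κ := fun j x y => G (j + 1) y * Mk (j + 1) x y)
        fun j => ((hGmeas _).comp measurable_snd).mul (hMkmeas _))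
  rw [integral_eq_lintegral_of_nonneg_ae, integral_eq_lintegral_of_nonneg_ae,
    lintegral_ofReal_fkIntegrand hM0meas hM0nonneg hMkmeas hMknonneg hGmeas hGnonneg hψnonneg
      hMψint hMψtop hbackward]
  · exact ae_of_all _ fun x => mul_nonneg (hψnonneg 0 x) (hM0nonneg x)
  · exact (hψ0meas.mul hM0meas).aestronglyMeasurable
  · exact ae_of_all _ fun x => mul_nonneg (mul_nonneg (hGnonneg _ _) (hM0nonneg _))
      (Finset.prod_nonneg fun j _ => mul_nonneg (hGnonneg _ _) (hMknonneg _ _ _))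
  · exact hfk_meas.aestronglyMeasurable

/-- The factor `C / C` makes this hold also when `C = ∫ ψ*_0 M_0 = 0`, where both sides vanish. -/
theorem twistedFkIntegrand_eq (hψne : ∀ k x, ψs k x ≠ 0)
    (hMψne : ∀ k x, ∫ y, ψs k y * Mk k x y ∂ν ≠ 0)
    (hMψtop : ∀ x, ∫ y, ψs (M + 1) y * Mk (M + 1) x y ∂ν = 1)
    (hbackward₀ : ∀ x, G 0 x * ∫ y, ψs 1 y * Mk 1 x y ∂ν = ψs 0 x) (x : Fin (M + 1) → X) :
    twistedFkIntegrand ν M M0 Mk G ψs x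
      = (∫ y, ψs 0 y * M0 y ∂ν) / (∫ y, ψs 0 y * M0 y ∂ν) * fkIntegrand M M0 Mk G x := by
  set f : Fin (M + 1) → ℝ := fun i => ∫ y, ψs (i + 1) y * Mk (i + 1) (x i) y ∂ν
  have hfactor : ∀ j : Fin M,
      G (j + 1) (x j.succ) * (∫ y, ψs (j + 2) y * Mk (j + 2) (x j.succ) y ∂ν) /
          ψs (j + 1) (x j.succ) *
        (ψs (j + 1) (x j.succ) * Mk (j + 1) (x j.castSucc) (x j.succ) /
          ∫ y, ψs (j + 1) y * Mk (j + 1) (x j.castSucc) y ∂ν)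
      = G (j + 1) (x j.succ) * Mk (j + 1) (x j.castSucc) (x j.succ) *
          (f j.succ / f j.castSucc) := by
    intro j
    have hψ := hψne (j + 1) (x j.succ)
    have hMψ := hMψne (j + 1) (x j.castSucc)
    simp only [f, Fin.val_succ, Fin.val_castSucc]
    field_simp
  have htelescope := Fin.prod_succ_div_castSucc f fun i => hMψne _ _
  simp only [f, Fin.val_last, Fin.val_zero, hMψtop] at htelescope
  rw [twistedFkIntegrand, fkIntegrand, Finset.prod_congr rfl fun j _ => hfactor j,
    Finset.prod_mul_distrib, htelescope, ← hbackward₀]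
  have hψ₀ : G 0 (x 0) * ∫ y, ψs 1 y * Mk 1 (x 0) y ∂ν ≠ 0 := hbackward₀ (x 0) ▸ hψne 0 (x 0)
  have hMψ₀ := hMψne 1 (x 0)
  field_simp

end FeynmanKac

theorem optimal_policy_exact_normalising_constant_general
    {X : Type*} [MeasurableSpace X] (ν : Measure X) [SigmaFinite ν]
    (M : ℕ)
    (M0 : X → ℝ) (Mk : ℕ → X → X → ℝ) (G : ℕ → X → ℝ) (ψs : ℕ → X → ℝ)
    -- M0 is a probability density
    (hM0meas : Measurable M0) (hM0pos : ∀ x, 0 ≤ M0 x)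
    -- the Mk are probability transition densities
    (hMkmeas : ∀ k, Measurable (Function.uncurry (Mk k)))
    (hMkpos : ∀ k x y, 0 ≤ Mk k x y)
    (hMkint : ∀ k x, ∫ y, Mk k x y ∂ν = 1)
    -- the potentials are strictly positive and measurable
    (hGmeas : ∀ k, Measurable (G k)) (hGpos : ∀ k x, 0 < G k x)
    -- backward recursion defining the optimal policy, with ψ*_{M+1} ≡ 1
    (hψtop : ∀ x, ψs (M + 1) x = 1)
    (hψM : ∀ x, ψs M x = G M x)
    (hψrec : ∀ k < M, ∀ x, ψs k x = G k x * ∫ y, ψs (k + 1) y * Mk (k + 1) x y ∂ν)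
    -- intermediate integrals are finite and positive
    (hψpos : ∀ k x, 0 < ψs k x)
    (hMψpos : ∀ k x, 0 < ∫ y, ψs k y * Mk k x y ∂ν) :
    -- all twisted potentials are identically one ...
    (∀ k ≤ M, ∀ x : X,
        G k x * (∫ y, ψs (k + 1) y * Mk (k + 1) x y ∂ν) / ψs k x = 1) ∧
    -- ... hence the twisted normalising constant Z^{ψ*} is the constant M_0(ψ*_0) ...
    (∫ x : Fin (M + 1) → X,
        ((∫ y, ψs 0 y * M0 y ∂ν) * G 0 (x 0) * (∫ y, ψs 1 y * Mk 1 (x 0) y ∂ν) / ψs 0 (x 0)) *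
          (ψs 0 (x 0) * M0 (x 0) / ∫ y, ψs 0 y * M0 y ∂ν) *
          ∏ j : Fin M,
            (G (j + 1) (x j.succ) * (∫ y, ψs (j + 2) y * Mk (j + 2) (x j.succ) y ∂ν) /
                ψs (j + 1) (x j.succ)) *
              (ψs (j + 1) (x j.succ) * Mk (j + 1) (x j.castSucc) (x j.succ) /
                ∫ y, ψs (j + 1) y * Mk (j + 1) (x j.castSucc) y ∂ν)
        ∂(Measure.pi fun _ => ν)) = ∫ y, ψs 0 y * M0 y ∂ν ∧
    -- ... which equals Z
    (∫ y, ψs 0 y * M0 y ∂ν) =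
      ∫ x : Fin (M + 1) → X,
        G 0 (x 0) * M0 (x 0) *
          ∏ j : Fin M, G (j + 1) (x j.succ) * Mk (j + 1) (x j.castSucc) (x j.succ)
        ∂(Measure.pi fun _ => ν) := by
  have hMψtop : ∀ x, ∫ y, ψs (M + 1) y * Mk (M + 1) x y ∂ν = 1 := fun x => by
    simp only [hψtop, one_mul, hMkint]
  have hbackward := optimal_policy_backward_eq hMψtop hψM hψrec
  have hZ : ∫ y, ψs 0 y * M0 y ∂ν = ∫ x, fkIntegrand M M0 Mk G x ∂(Measure.pi fun _ => ν) :=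
    (integral_fkIntegrand hM0meas hM0pos hMkmeas hMkpos hGmeas (fun k x => (hGpos k x).le)
      (measurable_optimal_policy hGmeas hMkmeas hψM hψrec M.zero_le) (fun k x => (hψpos k x).le)
      (fun k x => .of_integral_ne_zero (hMψpos k x).ne') hMψtop hbackward).symm
  refine ⟨fun k hk x => by rw [hbackward k hk x, div_self (hψpos k x).ne'], ?_, hZ⟩
  calc ∫ x, twistedFkIntegrand ν M M0 Mk G ψs x ∂(Measure.pi fun _ => ν)
      = ∫ x, (∫ y, ψs 0 y * M0 y ∂ν) / (∫ y, ψs 0 y * M0 y ∂ν) * fkIntegrand M M0 Mk G x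
          ∂(Measure.pi fun _ => ν) :=
        integral_congr_ae <| ae_of_all _ <| twistedFkIntegrand_eq (fun k x => (hψpos k x).ne')
          (fun k x => (hMψpos k x).ne') hMψtop (hbackward 0 M.zero_le)
    _ = ∫ y, ψs 0 y * M0 y ∂ν := by rw [integral_const_mul, ← hZ, div_self_mul_self]

/-- **Optimality of the backward-recursion policy.**
If `ψ*_M = G_M`, `ψ*_k = G_k · M_{k+1}(ψ*_{k+1})` for `k < M` and `ψ*_{M+1} ≡ 1`,
then all twisted potentials equal one, and the twisted normalising constant is
computed exactly by the deterministic constant `M_0(ψ*_0)`, which equals `Z`. -/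
theorem optimal_policy_exact_normalising_constant
    {X : Type*} [MeasurableSpace X] (ν : Measure X) [SigmaFinite ν]
    (M : ℕ)
    (M0 : X → ℝ) (Mk : ℕ → X → X → ℝ) (G : ℕ → X → ℝ) (ψs : ℕ → X → ℝ)
    -- M0 is a probability density
    (hM0meas : Measurable M0) (hM0pos : ∀ x, 0 ≤ M0 x) (hM0int : ∫ x, M0 x ∂ν = 1)
    -- the Mk are probability transition densities
    (hMkmeas : ∀ k, Measurable (Function.uncurry (Mk k)))
    (hMkpos : ∀ k x y, 0 ≤ Mk k x y)
    (hMkint : ∀ k x, ∫ y, Mk k x y ∂ν = 1)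
    -- the potentials are strictly positive and measurable
    (hGmeas : ∀ k, Measurable (G k)) (hGpos : ∀ k x, 0 < G k x)
    -- backward recursion defining the optimal policy, with ψ*_{M+1} ≡ 1
    (hψtop : ∀ x, ψs (M + 1) x = 1)
    (hψM : ∀ x, ψs M x = G M x)
    (hψrec : ∀ k < M, ∀ x, ψs k x = G k x * ∫ y, ψs (k + 1) y * Mk (k + 1) x y ∂ν)
    -- intermediate integrals are finite and positive
    (hψpos : ∀ k x, 0 < ψs k x)
    (hMψpos : ∀ k x, 0 < ∫ y, ψs k y * Mk k x y ∂ν)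
    -- Z is finite and positive
    (hZpos : 0 < ∫ x : Fin (M + 1) → X,
        G 0 (x 0) * M0 (x 0) *
          ∏ j : Fin M, G (j + 1) (x j.succ) * Mk (j + 1) (x j.castSucc) (x j.succ)
        ∂(Measure.pi fun _ => ν)) :
    -- all twisted potentials are identically one ...
    (∀ k ≤ M, ∀ x : X,
        G k x * (∫ y, ψs (k + 1) y * Mk (k + 1) x y ∂ν) / ψs k x = 1) ∧
    -- ... hence the twisted normalising constant Z^{ψ*} is the constant M_0(ψ*_0) ...
    (∫ x : Fin (M + 1) → X,
        ((∫ y, ψs 0 y * M0 y ∂ν) * G 0 (x 0) * (∫ y, ψs 1 y * Mk 1 (x 0) y ∂ν) / ψs 0 (x 0)) *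
          (ψs 0 (x 0) * M0 (x 0) / ∫ y, ψs 0 y * M0 y ∂ν) *
          ∏ j : Fin M,
            (G (j + 1) (x j.succ) * (∫ y, ψs (j + 2) y * Mk (j + 2) (x j.succ) y ∂ν) /
                ψs (j + 1) (x j.succ)) *
              (ψs (j + 1) (x j.succ) * Mk (j + 1) (x j.castSucc) (x j.succ) /
                ∫ y, ψs (j + 1) y * Mk (j + 1) (x j.castSucc) y ∂ν)
        ∂(Measure.pi fun _ => ν)) = ∫ y, ψs 0 y * M0 y ∂ν ∧
    -- ... which equals Z
    (∫ y, ψs 0 y * M0 y ∂ν) =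
      ∫ x : Fin (M + 1) → X,
        G 0 (x 0) * M0 (x 0) *
          ∏ j : Fin M, G (j + 1) (x j.succ) * Mk (j + 1) (x j.castSucc) (x j.succ)
        ∂(Measure.pi fun _ => ν) :=
  optimal_policy_exact_normalising_constant_general ν M M0 Mk G ψs hM0meas hM0pos hMkmeas hMkpos
    hMkint hGmeas hGpos hψtop hψM hψrec hψpos hMψpos
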